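/- arXiv:2509.04288 — 3 statements merged into one kernel-verified Lean document; each statement's English description precedes it below -/
import Mathlib

section
/- Behavioral inclusion of the SAℓCA: for any ℓ with H ≥ ℓ > 1, every H-long output behavior of a transition system S is also an H-long behavior of its Strongest Asynchronous ℓ-complete Abstraction S_ℓ, i.e., B^H(S) ⊆ B^H(S_ℓ). -/
/-!
The `ℓ`-long windows sliding along a behavior `b` form a run of the abstraction: each window is a
contiguous subsequence of `b`, consecutive windows overlap in `ℓ - 1` symbols (the domino rule),
the first one starts with the initial output, and the heads of the windows followed by the tail
of the last one spell out `b` again.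
-/

/-- A transition system `(X, X0, E, Y, H)`. -/
structure TS (X Y : Type*) where
  init : Set X
  edge : X → X → Prop
  out : X → Y

/-- The set of `H`-long output behaviors of a transition system. -/
def BehH {X Y : Type*} (S : TS X Y) (H : ℕ) : Set (List Y) :=
  {b | ∃ r : ℕ → X, r 0 ∈ S.init ∧ (∀ k, k + 1 < H → S.edge (r k) (r (k + 1))) ∧
        b = (List.range H).map fun k => S.out (r k)}

/-- The set of `ℓ`-long contiguous subsequences of a set of behaviors. -/
def Xell {Y : Type*} (B : Set (List Y)) (ℓ : ℕ) : Set (List Y) :=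
  {σ | σ.length = ℓ ∧ ∃ b ∈ B, σ <:+: b}

/-- The (strongest asynchronous) `ℓ`-complete abstraction built from a behavior set `B`
with initial-output set `Y0`: states are `ℓ`-long subsequences, transitions follow the
domino rule, the output is the first symbol. -/
def AbsTS {Y : Type*} [Inhabited Y] (B : Set (List Y)) (Y0 : Set Y) (ℓ : ℕ) :
    TS (List Y) Y where
  init := {σ | σ ∈ Xell B ℓ ∧ ∃ y ∈ Y0, σ.head? = some y}
  edge := fun σ σ' => σ ∈ Xell B ℓ ∧ σ' ∈ Xell B ℓ ∧ σ.tail = σ'.dropLast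
  out := fun σ => σ.headI

/-- The SAℓCA of a transition system `S` for horizon `H`. -/
def SAlCA {X Y : Type*} [Inhabited Y] (S : TS X Y) (H ℓ : ℕ) : TS (List Y) Y :=
  AbsTS (BehH S H) (S.out '' S.init) ℓ

/-- `H`-long behaviors of the abstraction built from behavior set `B`: a run of
`H - ℓ + 1` abstract states (windows) flattened into `H` output symbols (the heads of
the windows followed by the tail of the last window). -/
def AbsBeh {Y : Type*} [Inhabited Y] (B : Set (List Y)) (Y0 : Set Y) (H ℓ : ℕ) :
    Set (List Y) :=
  {b | ∃ r : ℕ → List Y, r 0 ∈ (AbsTS B Y0 ℓ).init ∧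
        (∀ k, k + 1 ≤ H - ℓ → (AbsTS B Y0 ℓ).edge (r k) (r (k + 1))) ∧
        b = ((List.range (H - ℓ + 1)).map fun k => (r k).headI) ++ (r (H - ℓ)).tail}

/-- `H`-long behaviors of the SAℓCA of `S`. -/
def AbsBehH {X Y : Type*} [Inhabited Y] (S : TS X Y) (H ℓ : ℕ) : Set (List Y) :=
  AbsBeh (BehH S H) (S.out '' S.init) H ℓ

def window {Y : Type*} (f : ℕ → Y) (ℓ k : ℕ) : List Y :=
  (List.range ℓ).map fun i => f (k + i)

section Window

variable {Y : Type*} (f : ℕ → Y)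

theorem map_range_eq_window (H : ℕ) : (List.range H).map f = window f H 0 := by
  simp [window]

theorem window_add (m n k : ℕ) : window f (m + n) k = window f m k ++ window f n (k + m) := by
  simp only [window, List.range_add, List.map_append, List.map_map]
  congr 1
  exact List.map_congr_left fun i _ => by simp [Function.comp, Nat.add_assoc]

@[simp]
theorem length_window (ℓ k : ℕ) : (window f ℓ k).length = ℓ := by
  simp [window]

theorem headI_window_succ [Inhabited Y] (n k : ℕ) : (window f (n + 1) k).headI = f k := by
  simp [window, List.range_succ_eq_map]

theorem tail_window_succ (n k : ℕ) : (window f (n + 1) k).tail = window f n (k + 1) := by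
  rw [Nat.add_comm, window_add]
  simp [window]

theorem dropLast_window_succ (n k : ℕ) : (window f (n + 1) k).dropLast = window f n k := by
  rw [window_add]
  simp [window]

theorem window_isInfix {ℓ k H : ℕ} (h : k + ℓ ≤ H) : window f ℓ k <:+: window f H 0 := by
  obtain ⟨m, rfl⟩ := Nat.exists_eq_add_of_le h
  rw [window_add, window_add, Nat.zero_add]
  exact ⟨_, _, rfl⟩

end Window

theorem map_range_mem_absBeh {Y : Type*} [Inhabited Y] {B : Set (List Y)} {Y0 : Set Y}
    {H ℓ : ℕ} (hℓ : 0 < ℓ) (hℓH : ℓ ≤ H) {f : ℕ → Y}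
    (hB : (List.range H).map f ∈ B) (h0 : f 0 ∈ Y0) :
    (List.range H).map f ∈ AbsBeh B Y0 H ℓ := by
  obtain ⟨n, rfl⟩ := Nat.exists_eq_add_one_of_ne_zero hℓ.ne'
  have mem_Xell : ∀ k, k ≤ H - (n + 1) → window f (n + 1) k ∈ Xell B (n + 1) := fun k hk =>
    ⟨length_window f _ _, _, hB, map_range_eq_window f H ▸ window_isInfix f (by omega)⟩
  refine ⟨window f (n + 1), ⟨mem_Xell 0 (Nat.zero_le _), f 0, h0, ?_⟩, fun k hk => ?_, ?_⟩
  · simp [window, List.range_succ_eq_map]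
  · exact ⟨mem_Xell k (by omega), mem_Xell (k + 1) (by omega),
      by rw [tail_window_succ, dropLast_window_succ]⟩
  · have hH : H = (H - (n + 1) + 1) + n := by omega
    simp only [headI_window_succ, tail_window_succ]
    conv_lhs => rw [hH, map_range_eq_window, window_add, ← map_range_eq_window, Nat.zero_add]

/-- behavioral inclusion of the SAℓCA: `B^H(S) ⊆ B^H(S_ℓ)` for `H ≥ ℓ > 1`. -/
theorem stmt1 {X Y : Type*} [Inhabited Y] (S : TS X Y) (H ℓ : ℕ)
    (h1 : 1 < ℓ) (h2 : ℓ ≤ H) :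
    BehH S H ⊆ AbsBehH S H ℓ := by
  rintro b ⟨r, hr0, hre, rfl⟩
  exact map_range_mem_absBeh (by omega) h2 ⟨r, hr0, hre, rfl⟩ ⟨r 0, hr0, rfl⟩
end

section
/- Chain of inclusions for data-driven abstractions: if the sampled behavior set satisfies ĥB ⊆ B^H(S), then the data-driven SAℓCA Ŝ_ℓ built from ĥB satisfies B^H(Ŝ_ℓ) ⊆ B^H(S_ℓ), where S_ℓ is the SAℓCA built from the full behavior set B^H(S). -/
section Monotonicity

variable {Y : Type*} {B B' : Set (List Y)}

theorem Xell_mono (hB : B ⊆ B') (ℓ : ℕ) : Xell B ℓ ⊆ Xell B' ℓ :=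
  fun _ ⟨hlen, b, hb, hinfix⟩ => ⟨hlen, b, hB hb, hinfix⟩

variable [Inhabited Y] {Y0 Y0' : Set Y}

theorem AbsTS_init_mono (hB : B ⊆ B') (hY : Y0 ⊆ Y0') (ℓ : ℕ) :
    (AbsTS B Y0 ℓ).init ⊆ (AbsTS B' Y0' ℓ).init :=
  fun _ ⟨hσ, y, hy, hhead⟩ => ⟨Xell_mono hB ℓ hσ, y, hY hy, hhead⟩

theorem AbsTS_edge_mono (hB : B ⊆ B') {ℓ : ℕ} {σ σ' : List Y}
    (h : (AbsTS B Y0 ℓ).edge σ σ') : (AbsTS B' Y0' ℓ).edge σ σ' :=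
  ⟨Xell_mono hB ℓ h.1, Xell_mono hB ℓ h.2.1, h.2.2⟩

theorem AbsBeh_mono (hB : B ⊆ B') (hY : Y0 ⊆ Y0') (H ℓ : ℕ) :
    AbsBeh B Y0 H ℓ ⊆ AbsBeh B' Y0' H ℓ :=
  fun _ ⟨r, hinit, hedge, hb⟩ =>
    ⟨r, AbsTS_init_mono hB hY ℓ hinit,
      fun k hk => AbsTS_edge_mono hB (hedge k hk), hb⟩

end Monotonicity

/-- monotonicity of the SAℓCA construction in the generating behavior set:
if the sampled behaviors satisfy `B̂ ⊆ B^H(S)`, then `B^H(Ŝ_ℓ) ⊆ B^H(S_ℓ)`. -/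
theorem stmt9 {X Y : Type*} [Inhabited Y] (S : TS X Y) (H ℓ : ℕ)
    (Bhat : Set (List Y)) (hsub : Bhat ⊆ BehH S H) :
    AbsBeh Bhat (S.out '' S.init) H ℓ ⊆ AbsBehH S H ℓ :=
  AbsBeh_mono hsub subset_rfl H ℓ
end

section
/- Every H-long behavior in the sample is a behavior of the data-driven SAℓCA: for any finite set of sampled initial conditions with behaviors B̂, each b ∈ B̂ belongs to B^H(Ŝ_ℓ), for any 1 < ℓ ≤ H. -/
/-! The ℓ-windows `(b.drop k).take ℓ`, `k ≤ H - ℓ`, of a sampled behavior `b` are ℓ-long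
infixes of `b`, consecutive windows overlap in `ℓ - 1` symbols, and the heads of the windows
followed by the tail of the last one spell out `b` again. -/

namespace List

variable {α : Type*}

def slidingWindow (b : List α) (ℓ k : ℕ) : List α :=
  (b.drop k).take ℓ

theorem slidingWindow_isInfix (b : List α) (ℓ k : ℕ) : b.slidingWindow ℓ k <:+: b :=
  (take_prefix ℓ _).isInfix.trans (drop_suffix k b).isInfix

theorem length_slidingWindow {b : List α} {ℓ k : ℕ} (h : k + ℓ ≤ b.length) :
    (b.slidingWindow ℓ k).length = ℓ := by
  simp only [slidingWindow, length_take, length_drop]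
  omega

theorem headI_slidingWindow [Inhabited α] (b : List α) {ℓ : ℕ} (hℓ : 0 < ℓ) (k : ℕ) :
    (b.slidingWindow ℓ k).headI = b.getI k := by
  rw [← getI_zero_eq_headI, slidingWindow, getI_eq_getElem?_getD, getI_eq_getElem?_getD,
    getElem?_take_of_lt hℓ, getElem?_drop, add_zero]

theorem tail_slidingWindow {b : List α} {ℓ k : ℕ} (h : k + 1 + ℓ ≤ b.length) :
    (b.slidingWindow ℓ k).tail = (b.slidingWindow ℓ (k + 1)).dropLast := by
  apply ext_getElem
  · simp only [slidingWindow, length_tail, length_dropLast, length_take, length_drop]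
    omega
  · intro i h1 h2
    simp only [slidingWindow, getElem_tail, getElem_dropLast, getElem_take, getElem_drop]
    congr 1
    omega

theorem map_headI_slidingWindow_append_tail [Inhabited α] {b : List α} {ℓ : ℕ} (hℓ : 0 < ℓ)
    (hℓb : ℓ ≤ b.length) :
    (range (b.length - ℓ + 1)).map (fun k => (b.slidingWindow ℓ k).headI) ++
      (b.slidingWindow ℓ (b.length - ℓ)).tail = b := by
  have hheads : (range (b.length - ℓ + 1)).map (fun k => (b.slidingWindow ℓ k).headI) =
      b.take (b.length - ℓ + 1) := by
    apply ext_getElem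
    · simp only [length_map, length_range, length_take]
      omega
    · intro i h1 h2
      simp only [getElem_map, getElem_range, headI_slidingWindow b hℓ, getElem_take]
      rw [getI_eq_getElem]
  have htail : (b.slidingWindow ℓ (b.length - ℓ)).tail = b.drop (b.length - ℓ + 1) := by
    rw [slidingWindow, tail_take_eq_take_tail, tail_drop, take_of_length_le]
    simp only [length_drop]
    omega
  rw [hheads, htail, take_append_drop]

end List

section Abstraction

variable {Y : Type*} {B : Set (List Y)} {b : List Y} {ℓ : ℕ}

theorem slidingWindow_mem_xell (hb : b ∈ B) {k : ℕ} (hk : k + ℓ ≤ b.length) :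
    b.slidingWindow ℓ k ∈ Xell B ℓ :=
  ⟨List.length_slidingWindow hk, b, hb, b.slidingWindow_isInfix ℓ k⟩

theorem mem_absBeh_length_of_mem [Inhabited Y] {Y0 : Set Y} (hb : b ∈ B) (hℓ : 0 < ℓ)
    (hℓb : ℓ ≤ b.length) (hY0 : ∃ y ∈ Y0, b.head? = some y) :
    b ∈ AbsBeh B Y0 b.length ℓ := by
  refine ⟨b.slidingWindow ℓ, ⟨slidingWindow_mem_xell hb (by omega), ?_⟩,
    fun k hk => ⟨slidingWindow_mem_xell hb (by omega), slidingWindow_mem_xell hb (by omega),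
      List.tail_slidingWindow (by omega)⟩,
    (List.map_headI_slidingWindow_append_tail hℓ hℓb).symm⟩
  obtain ⟨y, hy, hhead⟩ := hY0
  refine ⟨y, hy, ?_⟩
  rw [List.slidingWindow, List.drop_zero, List.head?_take, if_neg hℓ.ne', hhead]

end Abstraction

section Behaviors

variable {X Y : Type*} {S : TS X Y} {H : ℕ} {b : List Y}

theorem length_of_mem_behH (hb : b ∈ BehH S H) : b.length = H := by
  obtain ⟨r, -, -, rfl⟩ := hb
  simp

theorem head?_mem_out_image_init_of_mem_behH (hb : b ∈ BehH S H) (hH : 0 < H) :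
    ∃ y ∈ S.out '' S.init, b.head? = some y := by
  obtain ⟨r, hr0, -, rfl⟩ := hb
  refine ⟨S.out (r 0), ⟨r 0, hr0, rfl⟩, ?_⟩
  rw [List.head?_map, List.head?_range, if_neg hH.ne']
  rfl

end Behaviors

/-- every sampled `H`-long behavior is a behavior of the data-driven
SAℓCA built from the samples, for any `1 < ℓ ≤ H`. -/
theorem stmt10 {X Y : Type*} [Inhabited Y] (S : TS X Y) (H ℓ : ℕ)
    (h1 : 1 < ℓ) (h2 : ℓ ≤ H)
    (Bhat : Set (List Y)) (hsub : Bhat ⊆ BehH S H) :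
    ∀ b ∈ Bhat, b ∈ AbsBeh Bhat (S.out '' S.init) H ℓ := by
  intro b hb
  obtain rfl : b.length = H := length_of_mem_behH (hsub hb)
  exact mem_absBeh_length_of_mem hb (by omega) h2
    (head?_mem_out_image_init_of_mem_behH (hsub hb) (by omega))
end
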